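/- arXiv:2003.06374 — 2 statements merged into one kernel-verified Lean document; each statement's English description precedes it below -/
import Mathlib

section
/- Let G be a linearly ordered abelian group and H a subgroup. Define the initial index ε(G/H) as the cardinality of the set of elements g of G with g ≥ 0 such that g < h for every h in H with h > 0. Then ε(G/H) is at most the index [G : H] (as an inequality of cardinals, when the index is finite). -/
/-! If `0 ≤ a ≤ b` both lie below every positive element of `H` and `b - a ∈ H`, then `b - a`
cannot be positive, since it would exceed `b` and force `a < 0`. Hence the initial segment
injects into `G ⧸ H`. -/

section InitialSegment

variable {G : Type*} [AddCommGroup G] [LinearOrder G] [IsOrderedAddMonoid G] (H : AddSubgroup G)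

def initialSegment : Set G :=
  {g | 0 ≤ g ∧ ∀ h ∈ H, 0 < h → g < h}

variable {H}

theorem eq_of_mk_eq_of_mem_initialSegment {a b : G} (ha : a ∈ initialSegment H)
    (hb : b ∈ initialSegment H) (hab : (a : G ⧸ H) = b) : a = b := by
  wlog hle : a ≤ b generalizing a b
  · exact (this hb ha hab.symm (le_of_not_ge hle)).symm
  refine hle.antisymm (not_lt.mp fun hlt => ?_)
  have hmem : b - a ∈ H := QuotientAddGroup.eq_iff_sub_mem.mp hab.symm
  have hlt' : b < b - a := hb.2 _ hmem (sub_pos.mpr hlt)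
  exact (add_lt_iff_neg_left.mp (lt_sub_iff_add_lt.mp hlt')).not_ge ha.1

theorem injective_mk_initialSegment :
    Function.Injective fun g : initialSegment H => (g : G ⧸ H) :=
  fun a b hab => Subtype.ext (eq_of_mk_eq_of_mem_initialSegment a.2 b.2 hab)

end InitialSegment

/-- The initial index `ε(G/H)` of a subgroup `H` of a linearly ordered abelian group `G`,
i.e. the cardinality of `{g ∈ G : g ≥ 0 and g < h for all h ∈ H with h > 0}`,
is at most the index `[G : H]`, provided the index is finite. -/
theorem initial_index_le_index {G : Type*} [AddCommGroup G] [LinearOrder G] [IsOrderedAddMonoid G]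
    (H : AddSubgroup G) (hfin : H.index ≠ 0) :
    Cardinal.mk {g : G // 0 ≤ g ∧ ∀ h ∈ H, 0 < h → g < h} ≤ (H.index : Cardinal) := by
  have : Finite (G ⧸ H) := AddSubgroup.index_ne_zero_iff_finite.mp hfin
  calc Cardinal.mk (initialSegment H)
      ≤ Cardinal.mk (G ⧸ H) := Cardinal.mk_le_of_injective injective_mk_initialSegment
    _ = H.index := Nat.cast_card.symm
end

section
/- Let T be a local domain, P a prime ideal of T, and ω a valuation on the quotient field of T/P dominating T/P, inducing a pseudo-valuation on T by ω(f) = ω(f mod P) for f ∉ P and ω(f) = ∞ for f ∈ P. Suppose V_ω/m_ω is an algebraic extension of T/m_T. Let I ⊆ T be an ideal with I ⊄ P, let f ∈ I attain the minimal ω-value of I, and let J be the strict transform of P in T[I/f], i.e., J = ⋃_{j≥1} (P·T[I/f] : I^j·T[I/f]). Then J is a prime ideal of T[I/f], the induced map T/P → T[I/f]/J is birational (both domains have the same quotient field), and the prime ideal n of T[I/f] consisting of elements of positive ω-value is a maximal ideal containing J. -/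
/-!
Every element of `T[I/f]` has the form `a / f ^ j` with `a ∈ I ^ j`. Since `ω(f)` is minimal on
`I`, this gives `ω ≥ 0` on `T[I/f]` through the extension `ψ` of `T → T/P`, so the elements of
positive value form an ideal `n`; and it shows that `ker ψ` consists of the `x` with
`x f ^ j ∈ P T[I/f]` for some `j`. As `I T[I/f] = f T[I/f]`, this is the strict transform `J`,
which is therefore prime. Finally, if `ω(ψ x) = 0`, the residue of `ψ x` is algebraic over
`T/m_T`; dividing its equation by powers of `ψ x` until the constant term is a unit `u` gives
`u + x q(x) ∈ n`, so `x` is invertible modulo `n` and `n` is maximal.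
-/

open Polynomial

section AffineBlowup

variable {T : Type*} [CommRing T] (K : Type*) [CommRing K] [Algebra T K]

/-- The affine blowup algebra `T[I/f]`. -/
def affineBlowup (I : Ideal T) (f : T) : Subalgebra T K :=
  Algebra.adjoin T {x : K | ∃ g ∈ I, x * algebraMap T K f = algebraMap T K g}

variable {K} {I : Ideal T} {f : T}

theorem exists_mul_pow_eq_of_mem_affineBlowup (hfI : f ∈ I) {x : K}
    (hx : x ∈ affineBlowup K I f) :
    ∃ j : ℕ, ∃ a ∈ I ^ j, x * algebraMap T K f ^ j = algebraMap T K a := by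
  induction hx using Algebra.adjoin_induction with
  | mem x hx =>
    obtain ⟨g, hg, hxg⟩ := hx
    exact ⟨1, g, by rwa [pow_one], by rwa [pow_one]⟩
  | algebraMap t => exact ⟨0, t, by simp, by simp⟩
  | add x y _ _ ihx ihy =>
    obtain ⟨j, a, ha, hxa⟩ := ihx
    obtain ⟨k, b, hb, hyb⟩ := ihy
    refine ⟨j + k, a * f ^ k + b * f ^ j, Ideal.add_mem _ ?_ ?_, ?_⟩
    · rw [pow_add]
      exact Ideal.mul_mem_mul ha (Ideal.pow_mem_pow hfI k)
    · rw [add_comm j k, pow_add]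
      exact Ideal.mul_mem_mul hb (Ideal.pow_mem_pow hfI j)
    · simp only [map_add, map_mul, map_pow, pow_add]
      linear_combination algebraMap T K f ^ k * hxa + algebraMap T K f ^ j * hyb
  | mul x y _ _ ihx ihy =>
    obtain ⟨j, a, ha, hxa⟩ := ihx
    obtain ⟨k, b, hb, hyb⟩ := ihy
    refine ⟨j + k, a * b, by rw [pow_add]; exact Ideal.mul_mem_mul ha hb, ?_⟩
    rw [map_mul, pow_add]
    linear_combination y * algebraMap T K f ^ k * hxa + algebraMap T K a * hyb

theorem affineBlowup.exists_mul_pow_eq (hfI : f ∈ I) (x : affineBlowup K I f) :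
    ∃ j : ℕ, ∃ a ∈ I ^ j, x * algebraMap T _ f ^ j = algebraMap T _ a := by
  obtain ⟨j, a, ha, hxa⟩ := exists_mul_pow_eq_of_mem_affineBlowup hfI x.2
  exact ⟨j, a, ha, Subtype.ext (by simpa using hxa)⟩

theorem affineBlowup.map_eq_span_singleton (hfI : f ∈ I) (hf : IsUnit (algebraMap T K f)) :
    I.map (algebraMap T (affineBlowup K I f)) = Ideal.span {algebraMap T _ f} := by
  refine le_antisymm (Ideal.map_le_iff_le_comap.mpr fun g hg => ?_)
    (Ideal.span_le.mpr (by simpa using Ideal.mem_map_of_mem _ hfI))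
  have hgf : algebraMap T K g * ↑hf.unit⁻¹ ∈ affineBlowup K I f :=
    Algebra.subset_adjoin ⟨g, hg, by rw [mul_assoc, hf.val_inv_mul, mul_one]⟩
  exact Ideal.mem_span_singleton'.mpr
    ⟨⟨_, hgf⟩, Subtype.ext (by simp [mul_assoc, hf.val_inv_mul])⟩

end AffineBlowup

section StrictTransform

variable {S L : Type*} [CommRing S] [CommRing L] [NoZeroDivisors L]

theorem Ideal.mem_iSup_colon_span_singleton_pow {Q : Ideal S} {t x : S} :
    x ∈ ⨆ j : ℕ, Q.colon ((Ideal.span {t} ^ j : Ideal S) : Set S) ↔ ∃ j : ℕ, x * t ^ j ∈ Q := by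
  have hmono : Monotone fun j : ℕ => Q.colon ((Ideal.span {t} ^ j : Ideal S) : Set S) :=
    fun j k hjk => Submodule.colon_mono le_rfl (Ideal.pow_le_pow_right hjk)
  rw [Submodule.mem_iSup_of_directed _ hmono.directed_le]
  simp only [Ideal.span_singleton_pow, Submodule.colon_span, Submodule.mem_colon_singleton,
    smul_eq_mul]

theorem RingHom.ker_eq_iSup_colon_span_singleton_pow (ψ : S →+* L) {Q : Ideal S}
    (hQ : Q ≤ RingHom.ker ψ) {t : S} (ht : ψ t ≠ 0)
    (hker : ∀ x ∈ RingHom.ker ψ, ∃ j : ℕ, x * t ^ j ∈ Q) :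
    RingHom.ker ψ = ⨆ j : ℕ, Q.colon ((Ideal.span {t} ^ j : Ideal S) : Set S) := by
  ext x
  rw [Ideal.mem_iSup_colon_span_singleton_pow]
  refine ⟨hker x, fun ⟨j, hx⟩ => ?_⟩
  have := hQ hx
  rw [RingHom.mem_ker, map_mul, map_pow] at this
  rw [RingHom.mem_ker]
  exact (mul_eq_zero.mp this).resolve_right (pow_ne_zero j ht)

end StrictTransform

section Valuation

variable {R Γ₀ : Type*} [CommRing R] [LinearOrderedCommGroupWithZero Γ₀]

theorem Valuation.map_le_pow_of_mem_pow {w : Valuation R Γ₀} (hw : ∀ r, w r ≤ 1)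
    {I : Ideal R} {γ : Γ₀} (hI : ∀ g ∈ I, w g ≤ γ) {j : ℕ} {a : R} (ha : a ∈ I ^ j) :
    w a ≤ γ ^ j := by
  induction j generalizing a with
  | zero => simpa using hw a
  | succ j ih =>
    rw [pow_succ] at ha
    refine Submodule.mul_induction_on ha (fun b hb g hg => ?_)
      fun b c hb hc => (w.map_add b c).trans (max_le hb hc)
    rw [map_mul, pow_succ]
    exact mul_le_mul' (ih hb) (hI g hg)

/-- In multiplicative notation: the ideal of elements of positive value of a nonnegative
valuation. -/
def Valuation.ltOneIdeal (w : Valuation R Γ₀) (hw : ∀ r, w r ≤ 1) : Ideal R where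
  carrier := {r | w r < 1}
  add_mem' ha hb := (w.map_add _ _).trans_lt (max_lt ha hb)
  zero_mem' := by simp
  smul_mem' r s hs := by
    simpa only [smul_eq_mul, Set.mem_ofPred_eq, map_mul] using
      (mul_le_of_le_one_left' (hw r)).trans_lt hs

theorem Valuation.mem_ltOneIdeal {w : Valuation R Γ₀} {hw : ∀ r, w r ≤ 1} {r : R} :
    r ∈ w.ltOneIdeal hw ↔ w r < 1 :=
  Iff.rfl

end Valuation

theorem affineBlowup.valuation_le_one {T K L Γ₀ : Type*} [CommRing T] [CommRing K] [Algebra T K]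
    [CommRing L] [LinearOrderedCommGroupWithZero Γ₀] {v : Valuation L Γ₀} {π : T →+* L}
    (hdom : ∀ s, v (π s) ≤ 1) {I : Ideal T} {f : T} (hfI : f ∈ I)
    (hfmin : ∀ g ∈ I, v (π g) ≤ v (π f)) (hπf : v (π f) ≠ 0)
    {ψ : affineBlowup K I f →+* L} (hψT : ∀ s, ψ (algebraMap T _ s) = π s)
    (x : affineBlowup K I f) : v (ψ x) ≤ 1 := by
  obtain ⟨j, a, ha, hxa⟩ := affineBlowup.exists_mul_pow_eq hfI x
  have hψx : ψ x * π f ^ j = π a := by simpa [hψT] using congrArg ψ hxa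
  have : v (ψ x) * v (π f) ^ j ≤ 1 * v (π f) ^ j := calc
    v (ψ x) * v (π f) ^ j = v (π a) := by rw [← hψx, map_mul, map_pow]
    _ ≤ 1 * v (π f) ^ j := by
      rw [one_mul]
      exact (v.comap π).map_le_pow_of_mem_pow hdom hfmin ha
  exact le_of_mul_le_mul_right this (pow_pos (zero_lt_iff.mpr hπf) j)

section ResiduallyAlgebraic

variable {T L Γ₀ : Type*} [CommRing T] [CommRing L] [LinearOrderedCommGroupWithZero Γ₀]
  {v : Valuation L Γ₀} {π : T →+* L}

theorem exists_isUnit_add_mul_eval₂_lt_one (hπ : ∀ s, ¬IsUnit s → v (π s) < 1) {l : L}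
    (hl : v l = 1) {p : T[X]} {i : ℕ} (hi : IsUnit (p.coeff i)) (hp : v (p.eval₂ π l) < 1) :
    ∃ u : T, IsUnit u ∧ ∃ q : T[X], v (π u + l * q.eval₂ π l) < 1 := by
  have hsplit (p : T[X]) : p.eval₂ π l = π (p.coeff 0) + l * p.divX.eval₂ π l := by
    have := congrArg (eval₂ π l) (X_mul_divX_add p)
    rw [eval₂_add, eval₂_mul, eval₂_X, eval₂_C] at this
    rw [← this, add_comm]
  induction i generalizing p with
  | zero => exact ⟨p.coeff 0, hi, p.divX, hsplit p ▸ hp⟩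
  | succ i ih =>
    by_cases h0 : IsUnit (p.coeff 0)
    · exact ⟨p.coeff 0, h0, p.divX, hsplit p ▸ hp⟩
    refine ih (p := p.divX) (by rwa [coeff_divX]) ?_
    have : v (l * p.divX.eval₂ π l) < 1 := by
      rw [show l * _ = p.eval₂ π l - π (p.coeff 0) by rw [hsplit p]; ring]
      exact (v.map_sub _ _).trans_lt (max_lt hp (hπ _ h0))
    rwa [v.map_mul, hl, one_mul] at this

theorem isMaximal_ltOneIdeal_comap {S : Type*} [CommRing S] [Algebra T S] {ψ : S →+* L}
    (hψT : ∀ s, ψ (algebraMap T S s) = π s) (hπ : ∀ s, ¬IsUnit s → v (π s) < 1)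
    (halg : ∀ l : L, v l ≤ 1 → ∃ m : ℕ, 0 < m ∧ ∃ c : ℕ → T,
      v (l ^ m + ∑ i ∈ Finset.range m, π (c i) * l ^ i) < 1)
    (hle : ∀ x, v.comap ψ x ≤ 1) : ((v.comap ψ).ltOneIdeal hle).IsMaximal := by
  rw [Ideal.isMaximal_iff]
  refine ⟨by simp [Valuation.mem_ltOneIdeal], fun N x hN hxn hxN => ?_⟩
  have hvx : v (ψ x) = 1 := (hle x).antisymm (not_lt.mp hxn)
  obtain ⟨m, -, c, hc⟩ := halg (ψ x) (hle x)
  set p : T[X] := X ^ m + ∑ i ∈ Finset.range m, C (c i) * X ^ i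
  have hpm : p.coeff m = 1 := by simp [p, coeff_X_pow]
  obtain ⟨u, hu, q, hq⟩ := exists_isUnit_add_mul_eval₂_lt_one hπ hvx (p := p)
    (by rw [hpm]; exact isUnit_one) (by simpa [p, eval₂_finsetSum] using hc)
  have hcomp : ψ.comp (algebraMap T S) = π := RingHom.ext hψT
  have hmem : algebraMap T S u + x * aeval x q ∈ N :=
    hN (by simpa [Valuation.mem_ltOneIdeal, aeval_def, hom_eval₂, hcomp, hψT] using hq)
  have hinv : algebraMap T S ↑hu.unit⁻¹ * algebraMap T S u = 1 := by
    rw [← map_mul, hu.val_inv_mul, map_one]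
  have h1 : algebraMap T S ↑hu.unit⁻¹ * (algebraMap T S u + x * aeval x q)
      - x * (algebraMap T S ↑hu.unit⁻¹ * aeval x q) = 1 := by
    linear_combination hinv
  exact h1 ▸ N.sub_mem (N.mul_mem_left _ hmem) (N.mul_mem_right _ hxN)

end ResiduallyAlgebraic

theorem strict_transform_prime_and_maximal_general
    {T : Type*} [CommRing T] [IsDomain T] [IsLocalRing T]
    {L : Type*} [Field L] {Γ₀ : Type*} [LinearOrderedCommGroupWithZero Γ₀]
    (v : Valuation L Γ₀) (π : T →+* L)
    (P : Ideal T) (hker : RingHom.ker π = P)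
    (hdom : ∀ s : T, v (π s) ≤ 1)
    (hdom' : ∀ s : T, v (π s) < 1 ↔ s ∈ IsLocalRing.maximalIdeal T)
    (halg : ∀ l : L, v l ≤ 1 → ∃ m : ℕ, 0 < m ∧ ∃ c : ℕ → T,
      v (l ^ m + ∑ i ∈ Finset.range m, π (c i) * l ^ i) < 1)
    (I : Ideal T) (hIP : ¬ I ≤ P)
    (f : T) (hfI : f ∈ I) (hfmin : ∀ g ∈ I, v (π g) ≤ v (π f))
    (S : Subalgebra T (FractionRing T))
    (hS : S = Algebra.adjoin T {x : FractionRing T |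
      ∃ g ∈ I, x * algebraMap T (FractionRing T) f = algebraMap T (FractionRing T) g})
    (ψ : S →+* L)
    (hψT : ∀ s : T, ψ (algebraMap T S s) = π s)
    (J : Ideal S)
    (hJ : J = ⨆ j : ℕ, (Ideal.map (algebraMap T S) P).colon
      (((Ideal.map (algebraMap T S) I) ^ j : Ideal S) : Set S)) :
    J.IsPrime ∧ RingHom.ker ψ = J ∧
    ∃ n : Ideal S, n.IsMaximal ∧ J ≤ n ∧ ∀ x : S, x ∈ n ↔ v (ψ x) < 1 := by
  obtain rfl : S = affineBlowup (FractionRing T) I f := hS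
  have hπf : π f ≠ 0 := fun h => hIP fun g hg => by
    simpa [← hker, h] using hfmin g hg
  have hf : IsUnit (algebraMap T (FractionRing T) f) :=
    IsLocalization.map_units _ (⟨f, mem_nonZeroDivisors_of_ne_zero fun h => hπf (by simp [h])⟩ :
      nonZeroDivisors T)
  have hPS : P.map (algebraMap T _) ≤ RingHom.ker ψ :=
    Ideal.map_le_iff_le_comap.mpr fun p hp => by
      rw [Ideal.mem_comap, RingHom.mem_ker, hψT, ← RingHom.mem_ker, hker]
      exact hp
  have hkerJ : RingHom.ker ψ = J := by
    rw [hJ, affineBlowup.map_eq_span_singleton hfI hf]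
    refine ψ.ker_eq_iSup_colon_span_singleton_pow hPS (by rwa [hψT]) fun x hx => ?_
    obtain ⟨j, a, -, hxa⟩ := affineBlowup.exists_mul_pow_eq hfI x
    have ha : π a = 0 := by simpa [RingHom.mem_ker.mp hx, hψT] using (congrArg ψ hxa).symm
    exact ⟨j, hxa ▸ Ideal.mem_map_of_mem _ (hker ▸ ha)⟩
  have hle : ∀ x, v.comap ψ x ≤ 1 := affineBlowup.valuation_le_one hdom hfI hfmin (by simpa using hπf) hψT
  refine ⟨hkerJ ▸ RingHom.ker_isPrime ψ, hkerJ, (v.comap ψ).ltOneIdeal hle,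
    isMaximal_ltOneIdeal_comap hψT (fun s hs => (hdom' s).mpr hs) halg hle,
    fun x hx => ?_, fun x => Iff.rfl⟩
  rw [← hkerJ, RingHom.mem_ker] at hx
  simp [Valuation.mem_ltOneIdeal, hx]

/-- The strict transform lemma for pseudo-valuations. Let `T` be a local domain with
fraction field `Kf`, `P ⊂ T` a prime, and `ω` a valuation (here `v`, in multiplicative
notation, on a field `L` realizing `Frac(T/P)` via `π : T →+* L` with kernel `P`)
dominating `T/P`, whose residue field is algebraic over `T/m_T`.  Let `I ⊄ P` be an
ideal and `f ∈ I` an element of minimal `ω`-value (maximal `v`-value), and let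
`S = T[I/f] ⊆ Frac T`.  Let `ψ : S →+* L` be the induced extension of `π` (with
`ψ(g/f)·π(f) = π(g)`), and `J` the strict transform `⋃_j (P·S : I^j·S)` of `P`.
Then `J` is prime, `J = ker ψ` (so `T/P → S/J` is birational, both having quotient
field `L`), and the set `n` of elements of `S` of positive `ω`-value is a maximal
ideal of `S` containing `J`. -/
theorem strict_transform_prime_and_maximal
    {T : Type*} [CommRing T] [IsDomain T] [IsLocalRing T]
    {L : Type*} [Field L] {Γ₀ : Type*} [LinearOrderedCommGroupWithZero Γ₀]
    (v : Valuation L Γ₀) (π : T →+* L)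
    (P : Ideal T) (hPprime : P.IsPrime) (hker : RingHom.ker π = P)
    (hfrac : ∀ l : L, ∃ a s : T, π s ≠ 0 ∧ l * π s = π a)
    (hdom : ∀ s : T, v (π s) ≤ 1)
    (hdom' : ∀ s : T, v (π s) < 1 ↔ s ∈ IsLocalRing.maximalIdeal T)
    (halg : ∀ l : L, v l ≤ 1 → ∃ m : ℕ, 0 < m ∧ ∃ c : ℕ → T,
      v (l ^ m + ∑ i ∈ Finset.range m, π (c i) * l ^ i) < 1)
    (I : Ideal T) (hI0 : I ≠ 0) (hIP : ¬ I ≤ P)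
    (f : T) (hfI : f ∈ I) (hfmin : ∀ g ∈ I, v (π g) ≤ v (π f))
    (S : Subalgebra T (FractionRing T))
    (hS : S = Algebra.adjoin T {x : FractionRing T |
      ∃ g ∈ I, x * algebraMap T (FractionRing T) f = algebraMap T (FractionRing T) g})
    (ψ : S →+* L)
    (hψT : ∀ s : T, ψ (algebraMap T S s) = π s)
    (hψf : ∀ (x : S) (g : T), g ∈ I →
      (x : FractionRing T) * algebraMap T (FractionRing T) f =
        algebraMap T (FractionRing T) g → ψ x * π f = π g)
    (J : Ideal S)
    (hJ : J = ⨆ j : ℕ, (Ideal.map (algebraMap T S) P).colon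
      (((Ideal.map (algebraMap T S) I) ^ j : Ideal S) : Set S)) :
    J.IsPrime ∧ RingHom.ker ψ = J ∧
    ∃ n : Ideal S, n.IsMaximal ∧ J ≤ n ∧ ∀ x : S, x ∈ n ↔ v (ψ x) < 1 :=
  strict_transform_prime_and_maximal_general v π P hker hdom hdom' halg I hIP f hfI hfmin S hS ψ hψT
    J hJ
end
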